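/- Multihead self-attention is equivariant under row permutations: fix d > 0, a finite index set of heads H, and for each head h weight matrices W_Q h, W_K h : Matrix (Fin m) (Fin d) ℝ, W_V h : Matrix (Fin m) (Fin d') ℝ, and output projections W_O h : Matrix (Fin d') (Fin m) ℝ. Define MHSA(S) = Σ_{h ∈ H} Att_h(S) * W_O h, where Att_h(S) = A_h * (S * W_V h) and A_h i j = exp(((S*W_Q h)*(S*W_K h)ᵀ i j)/√d) / Σ_{l} exp(((S*W_Q h)*(S*W_K h)ᵀ i l)/√d). Then MHSA(π · S) = π · MHSA(S) for every permutation π of Fin n and every S : Matrix (Fin n) (Fin m) ℝ. -/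

import Mathlib

open Matrix in
/-- Single-head self-attention: `Att(S) = A * (S * W_V)` where `A` is the
row-wise softmax of `(1/√d) * (S * W_Q) * (S * W_K)ᵀ`. -/
noncomputable def selfAttention {n m d d' : ℕ}
    (WQ WK : Matrix (Fin m) (Fin d) ℝ) (WV : Matrix (Fin m) (Fin d') ℝ)
    (S : Matrix (Fin n) (Fin m) ℝ) : Matrix (Fin n) (Fin d') ℝ :=
  (Matrix.of fun i j =>
      Real.exp ((((S * WQ) * (S * WK)ᵀ) i j) / Real.sqrt d) /
        ∑ l, Real.exp ((((S * WQ) * (S * WK)ᵀ) i l) / Real.sqrt d)) * (S * WV)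

/-- Multihead self-attention: per-head attention outputs are combined by
per-head output projections `W_O h` and summed over the finite set of heads. -/
noncomputable def multiheadSelfAttention {n m d d' : ℕ} {H : Type*} [Fintype H]
    (WQ WK : H → Matrix (Fin m) (Fin d) ℝ) (WV : H → Matrix (Fin m) (Fin d') ℝ)
    (WO : H → Matrix (Fin d') (Fin m) ℝ)
    (S : Matrix (Fin n) (Fin m) ℝ) : Matrix (Fin n) (Fin m) ℝ :=
  ∑ h, selfAttention (WQ h) (WK h) (WV h) S * WO h

/-!
Permuting the tokens permutes the rows of the queries `S * W_Q`, keys `S * W_K` and values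
`S * W_V`, hence permutes both rows and columns of the score matrix by the same permutation.
The row-wise softmax commutes with such a permutation, since reordering a row does not change
its normalizing sum, and the column permutation of the attention matrix cancels against the row
permutation of the values in their product.
-/

open Matrix

noncomputable def rowSoftmax {ι κ : Type*} [Fintype κ] (M : Matrix ι κ ℝ) : Matrix ι κ ℝ :=
  of fun i j => Real.exp (M i j) / ∑ l, Real.exp (M i l)

theorem rowSoftmax_submatrix {ι ι' κ κ' : Type*} [Fintype κ] [Fintype κ']
    (M : Matrix ι κ ℝ) (r : ι' → ι) (c : κ' ≃ κ) :
    rowSoftmax (M.submatrix r c) = (rowSoftmax M).submatrix r c := by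
  ext i j
  simp only [rowSoftmax, submatrix_apply, of_apply,
    c.sum_comp fun l => Real.exp (M (r i) l)]

theorem submatrix_id_mul {α ι ι' κ μ : Type*} [Fintype κ] [Mul α] [AddCommMonoid α]
    (S : Matrix ι κ α) (W : Matrix κ μ α) (r : ι' → ι) :
    S.submatrix r id * W = (S * W).submatrix r id := by
  rw [submatrix_mul S W r id id Function.bijective_id, submatrix_id_id]

theorem selfAttention_eq_rowSoftmax {n m d d' : ℕ}
    (WQ WK : Matrix (Fin m) (Fin d) ℝ) (WV : Matrix (Fin m) (Fin d') ℝ)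
    (S : Matrix (Fin n) (Fin m) ℝ) :
    selfAttention WQ WK WV S =
      rowSoftmax (((S * WQ) * (S * WK)ᵀ).map (· / Real.sqrt d)) * (S * WV) :=
  rfl

theorem selfAttention_submatrix_rows {n n' m d d' : ℕ}
    (WQ WK : Matrix (Fin m) (Fin d) ℝ) (WV : Matrix (Fin m) (Fin d') ℝ)
    (S : Matrix (Fin n) (Fin m) ℝ) (σ : Fin n' ≃ Fin n) :
    selfAttention WQ WK WV (S.submatrix σ id) = (selfAttention WQ WK WV S).submatrix σ id := by
  have scores : (S.submatrix σ id * WQ) * (S.submatrix σ id * WK)ᵀ =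
      ((S * WQ) * (S * WK)ᵀ).submatrix σ σ := by
    rw [submatrix_id_mul S WQ, submatrix_id_mul S WK, transpose_submatrix]
    exact (submatrix_mul _ _ _ _ _ Function.bijective_id).symm
  rw [selfAttention_eq_rowSoftmax, selfAttention_eq_rowSoftmax, scores, ← submatrix_map,
    rowSoftmax_submatrix, submatrix_id_mul, submatrix_mul_equiv]

theorem multiheadSelfAttention_submatrix_rows {n n' m d d' : ℕ} {H : Type*} [Fintype H]
    (WQ WK : H → Matrix (Fin m) (Fin d) ℝ) (WV : H → Matrix (Fin m) (Fin d') ℝ)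
    (WO : H → Matrix (Fin d') (Fin m) ℝ)
    (S : Matrix (Fin n) (Fin m) ℝ) (σ : Fin n' ≃ Fin n) :
    multiheadSelfAttention WQ WK WV WO (S.submatrix σ id) =
      (multiheadSelfAttention WQ WK WV WO S).submatrix σ id := by
  simp only [multiheadSelfAttention, selfAttention_submatrix_rows, submatrix_id_mul]
  ext i j
  simp only [submatrix_apply, Matrix.sum_apply, id]

theorem multiheadSelfAttention_row_permutation_equivariant_general
    {n m d d' : ℕ} {H : Type*} [Fintype H]
    (WQ WK : H → Matrix (Fin m) (Fin d) ℝ) (WV : H → Matrix (Fin m) (Fin d') ℝ)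
    (WO : H → Matrix (Fin d') (Fin m) ℝ)
    (π : Equiv.Perm (Fin n)) (S : Matrix (Fin n) (Fin m) ℝ) :
    multiheadSelfAttention WQ WK WV WO (Matrix.of fun i j => S (π⁻¹ i) j) =
      Matrix.of fun i j => multiheadSelfAttention WQ WK WV WO S (π⁻¹ i) j :=
  multiheadSelfAttention_submatrix_rows WQ WK WV WO S π⁻¹

/-- Multihead self-attention is equivariant under row permutations:
`MHSA(π · S) = π · MHSA(S)`, where `(π · S) i j = S (π⁻¹ i) j`. -/
theorem multiheadSelfAttention_row_permutation_equivariant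
    {n m d d' : ℕ} {H : Type*} [Fintype H] (hd : 0 < d)
    (WQ WK : H → Matrix (Fin m) (Fin d) ℝ) (WV : H → Matrix (Fin m) (Fin d') ℝ)
    (WO : H → Matrix (Fin d') (Fin m) ℝ)
    (π : Equiv.Perm (Fin n)) (S : Matrix (Fin n) (Fin m) ℝ) :
    multiheadSelfAttention WQ WK WV WO (Matrix.of fun i j => S (π⁻¹ i) j) =
      Matrix.of fun i j => multiheadSelfAttention WQ WK WV WO S (π⁻¹ i) j :=
  multiheadSelfAttention_row_permutation_equivariant_general WQ WK WV WO π S
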